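/- arXiv:2604.00365 — 2 statements merged into one kernel-verified Lean document; each statement's English description precedes it below -/
import Mathlib

section
/- Let g(x) = Ax + b be an affine map from R^n to R^m with g(x̄) = 0 and Im(A) ∩ Q_m = {0}, and let Ω := {x : g(x) ∈ Q_m}. Then there exists κ > 0 such that dist(x, Ω) ≤ κ · dist(g(x), Q_m) for all x ∈ R^n (i.e., the metric subregularity constraint qualification holds globally). -/
open scoped RealInnerProductSpace

noncomputable section

/-- The "tail" `y_r` of a vector `y = (y_0, y_r) ∈ ℝ × ℝ^d`. -/
def tail {d : ℕ} (y : EuclideanSpace ℝ (Fin (d+1))) : EuclideanSpace ℝ (Fin d) :=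
  WithLp.toLp 2 (fun i => y i.succ)

/-- The second-order (Lorentz) cone `Q_{d+1} = {(y_0, y_r) : ‖y_r‖ ≤ y_0}`. -/
def SOC (d : ℕ) : Set (EuclideanSpace ℝ (Fin (d+1))) := {y | ‖tail y‖ ≤ y 0}

/-- `x̃ = (-x_0, x_r)`. -/
def tilde {d : ℕ} (x : EuclideanSpace ℝ (Fin (d+1))) : EuclideanSpace ℝ (Fin (d+1)) :=
  WithLp.toLp 2 (fun i => if i = 0 then -(x 0) else x i)

/-- `tail` as a linear map. -/
def tailL (d : ℕ) : EuclideanSpace ℝ (Fin (d+1)) →ₗ[ℝ] EuclideanSpace ℝ (Fin d) where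
  toFun := tail
  map_add' _ _ := by ext; simp [tail]
  map_smul' _ _ := by ext; simp [tail]

lemma soc_zero_mem (d : ℕ) : (0 : EuclideanSpace ℝ (Fin (d+1))) ∈ SOC d := by
  have h : tail (0 : EuclideanSpace ℝ (Fin (d+1))) = 0 := by ext; simp [tail]
  simp [SOC, h]

lemma soc_smul {d : ℕ} {t : ℝ} (ht : 0 ≤ t) {y : EuclideanSpace ℝ (Fin (d+1))}
    (hy : y ∈ SOC d) : t • y ∈ SOC d := by
  have h : tail (t • y) = t • tail y := by ext; simp [tail]
  have h0 : (t • y) 0 = t * y 0 := rfl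
  simp only [SOC, Set.mem_setOf_eq, h, h0, norm_smul, Real.norm_eq_abs, abs_of_nonneg ht]
  exact mul_le_mul_of_nonneg_left hy ht

lemma soc_closed (d : ℕ) : IsClosed (SOC d) := by
  have h1 : Continuous fun y : EuclideanSpace ℝ (Fin (d+1)) => ‖tail y‖ :=
    (tailL d).continuous_of_finiteDimensional.norm
  have h2 : Continuous fun y : EuclideanSpace ℝ (Fin (d+1)) => y 0 :=
    (EuclideanSpace.proj (0 : Fin (d+1)) : EuclideanSpace ℝ (Fin (d+1)) →L[ℝ] ℝ).continuous
  exact isClosed_le h1 h2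

/-- Lower homogeneity of the distance to the cone. -/
lemma smul_infDist_le {d : ℕ} {t : ℝ} (ht : 0 < t) (y : EuclideanSpace ℝ (Fin (d+1))) :
    t * Metric.infDist y (SOC d) ≤ Metric.infDist (t • y) (SOC d) := by
  by_contra hcon
  push_neg at hcon
  obtain ⟨z, hz, hdz⟩ := (Metric.infDist_lt_iff ⟨0, soc_zero_mem d⟩).mp hcon
  have hdist : dist (t • y) z = t * dist y (t⁻¹ • z) := by
    rw [dist_eq_norm, dist_eq_norm]
    have h : t • y - z = t • (y - t⁻¹ • z) := by
      rw [smul_sub, smul_inv_smul₀ ht.ne']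
    rw [h, norm_smul, Real.norm_of_nonneg ht.le]
  have hmem : t⁻¹ • z ∈ SOC d := soc_smul (inv_nonneg.mpr ht.le) hz
  have := Metric.infDist_le_dist_of_mem (x := y) hmem
  rw [hdist] at hdz
  nlinarith

theorem mscq_trivial_intersection (n d : ℕ)
    (A : EuclideanSpace ℝ (Fin n) →ₗ[ℝ] EuclideanSpace ℝ (Fin (d+1)))
    (b : EuclideanSpace ℝ (Fin (d+1))) (xb : EuclideanSpace ℝ (Fin n))
    (hg : A xb + b = 0) (hA : Set.range ⇑A ∩ SOC d = {0}) :
    ∃ κ : ℝ, 0 < κ ∧ ∀ x : EuclideanSpace ℝ (Fin n),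
      Metric.infDist x {z | A z + b ∈ SOC d} ≤ κ * Metric.infDist (A x + b) (SOC d) := by
  classical
  have hb : b = -A xb := by
    exact eq_neg_of_add_eq_zero_right hg
  have hgx : ∀ x, A x + b = A (x - xb) := by
    intro x; rw [map_sub, hb]; abel
  have hkey : ∀ v : EuclideanSpace ℝ (Fin n), A v ∈ SOC d → A v = 0 := by
    intro v hv
    have h : A v ∈ Set.range ⇑A ∩ SOC d := ⟨⟨v, rfl⟩, hv⟩
    rw [hA] at h
    exact h
  set K := LinearMap.ker A with hK
  -- the set of points whose distance we estimate
  set Ω : Set (EuclideanSpace ℝ (Fin n)) := {z | A z + b ∈ SOC d} with hΩ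
  -- membership of `x - w` when `x - xb - w ∈ ker A`
  have hmemΩ : ∀ x w : EuclideanSpace ℝ (Fin n), (x - xb) - w ∈ K → x - w ∈ Ω := by
    intro x w hw
    have : A (x - w) + b = A ((x - xb) - w) := by
      rw [hgx]; congr 1; abel
    simp only [hΩ, Set.mem_setOf_eq, this, LinearMap.mem_ker.mp hw]
    exact soc_zero_mem d
  by_cases hT : ∃ w : EuclideanSpace ℝ (Fin n), w ∈ Kᗮ ∧ w ≠ 0
  · -- nondegenerate case: compactness argument on the unit sphere of Kᗮ
    set T : Set (EuclideanSpace ℝ (Fin n)) := (Kᗮ : Set _) ∩ Metric.sphere 0 1 with hTdef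
    have hTne : T.Nonempty := by
      obtain ⟨w, hwmem, hw0⟩ := hT
      refine ⟨‖w‖⁻¹ • w, Kᗮ.smul_mem _ hwmem, ?_⟩
      simp [norm_smul, norm_ne_zero_iff.mpr hw0, inv_mul_cancel₀ (norm_ne_zero_iff.mpr hw0)]
    have hTcp : IsCompact T := by
      have : IsCompact (Metric.sphere (0 : EuclideanSpace ℝ (Fin n)) 1) := isCompact_sphere 0 1
      exact this.inter_left (Kᗮ.closed_of_finiteDimensional)
    have hAc : Continuous ⇑A := A.continuous_of_finiteDimensional
    have hfc : Continuous fun w : EuclideanSpace ℝ (Fin n) =>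
        Metric.infDist (A w) (SOC d) := (Metric.continuous_infDist_pt (SOC d)).comp hAc
    obtain ⟨w₀, hw₀T, hmin⟩ := hTcp.exists_isMinOn hTne hfc.continuousOn
    set c : ℝ := Metric.infDist (A w₀) (SOC d) with hc
    have hcpos : 0 < c := by
      have hw₀ne : w₀ ≠ 0 := by
        intro h
        have := hw₀T.2
        rw [h] at this
        simp at this
      have hAw₀ : A w₀ ≠ 0 := by
        intro h
        have hmemK : w₀ ∈ K := LinearMap.mem_ker.mpr h
        have hinner : ⟪w₀, w₀⟫ = 0 :=
          Submodule.inner_right_of_mem_orthogonal hmemK hw₀T.1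
        exact hw₀ne (inner_self_eq_zero.mp hinner)
      have hnot : A w₀ ∉ SOC d := fun h => hAw₀ (hkey w₀ h)
      exact ((soc_closed d).notMem_iff_infDist_pos ⟨0, soc_zero_mem d⟩).mp hnot
    refine ⟨c⁻¹, inv_pos.mpr hcpos, ?_⟩
    intro x
    set v : EuclideanSpace ℝ (Fin n) := x - xb with hv
    set w : EuclideanSpace ℝ (Fin n) := v - (K.orthogonalProjectionOnto v : EuclideanSpace ℝ (Fin n)) with hwdef
    have hwperp : w ∈ Kᗮ := Submodule.sub_starProjection_mem_orthogonal (K := K) v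
    have hsub : v - w ∈ K := by
      have : v - w = (K.orthogonalProjectionOnto v : EuclideanSpace ℝ (Fin n)) := by
        rw [hwdef]; abel
      rw [this]; exact (K.orthogonalProjectionOnto v).2
    have hdle : Metric.infDist x Ω ≤ ‖w‖ := by
      have hmem : x - w ∈ Ω := hmemΩ x w hsub
      have := Metric.infDist_le_dist_of_mem (x := x) hmem
      rwa [dist_eq_norm, sub_sub_cancel] at this
    have hAwv : A w = A x + b := by
      have h1 : A v - A w = 0 := by
        rw [← map_sub]; exact LinearMap.mem_ker.mp hsub
      have h2 : A w = A v := by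
        have := sub_eq_zero.mp h1; exact this.symm
      rw [h2, hgx]
    by_cases hw0 : w = 0
    · rw [hw0] at hdle
      simp only [norm_zero] at hdle
      calc Metric.infDist x Ω ≤ 0 := hdle
        _ ≤ c⁻¹ * Metric.infDist (A x + b) (SOC d) :=
          mul_nonneg (inv_pos.mpr hcpos).le Metric.infDist_nonneg
    · have hwn : (0 : ℝ) < ‖w‖ := norm_pos_iff.mpr hw0
      set u : EuclideanSpace ℝ (Fin n) := ‖w‖⁻¹ • w with hu
      have huT : u ∈ T := by
        refine ⟨Kᗮ.smul_mem _ hwperp, ?_⟩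
        simp [hu, norm_smul, inv_mul_cancel₀ hwn.ne']
      have hcu : c ≤ Metric.infDist (A u) (SOC d) := hmin huT
      have hhom : ‖w‖ * Metric.infDist (A u) (SOC d) ≤
          Metric.infDist (‖w‖ • A u) (SOC d) := smul_infDist_le hwn (A u)
      have hscal : ‖w‖ • A u = A w := by
        rw [hu, map_smul, smul_smul, mul_inv_cancel₀ hwn.ne', one_smul]
      rw [hscal, hAwv] at hhom
      have hchain : ‖w‖ * c ≤ Metric.infDist (A x + b) (SOC d) := by
        calc ‖w‖ * c ≤ ‖w‖ * Metric.infDist (A u) (SOC d) :=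
              mul_le_mul_of_nonneg_left hcu hwn.le
          _ ≤ _ := hhom
      calc Metric.infDist x Ω ≤ ‖w‖ := hdle
        _ ≤ c⁻¹ * Metric.infDist (A x + b) (SOC d) := by
            have h := (le_div_iff₀ hcpos).mpr hchain
            rwa [div_eq_inv_mul] at h
  · -- degenerate case: `Kᗮ = 0`, so every point lies in `Ω`
    push_neg at hT
    refine ⟨1, one_pos, ?_⟩
    intro x
    set v : EuclideanSpace ℝ (Fin n) := x - xb with hv
    set w : EuclideanSpace ℝ (Fin n) := v - (K.orthogonalProjectionOnto v : EuclideanSpace ℝ (Fin n)) with hwdef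
    have hwperp : w ∈ Kᗮ := Submodule.sub_starProjection_mem_orthogonal (K := K) v
    have hw0 : w = 0 := by
      by_contra h
      exact h (hT w hwperp)
    have hsub : v - w ∈ K := by
      have : v - w = (K.orthogonalProjectionOnto v : EuclideanSpace ℝ (Fin n)) := by
        rw [hwdef]; abel
      rw [this]; exact (K.orthogonalProjectionOnto v).2
    have hmem : x - w ∈ Ω := hmemΩ x w hsub
    rw [hw0, sub_zero] at hmem
    rw [Metric.infDist_zero_of_mem hmem]
    exact mul_nonneg one_pos.le Metric.infDist_nonneg
end
end

section
/- Let A be an m×n matrix and v ∈ bd⁺(Q_m). If {t·A*((-v_0, v_r)) : t ≤ 0} = A*(v^⊥), then A*((-v_0, v_r)) = 0 and, provided Im(A) ≠ {0}, one has ker(A*) = v^⊥ and hence Im(A) = R·v. -/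
open scoped RealInnerProductSpace

noncomputable section

theorem adjoint_ray_eq_image_perp (n d : ℕ)
    (A : EuclideanSpace ℝ (Fin n) →ₗ[ℝ] EuclideanSpace ℝ (Fin (d+1)))
    (v : EuclideanSpace ℝ (Fin (d+1))) (hv : v 0 = ‖tail v‖) (hpos : 0 < v 0)
    (h : {y : EuclideanSpace ℝ (Fin n) | ∃ t : ℝ, t ≤ 0 ∧ y = t • (LinearMap.adjoint A) (tilde v)}
          = ⇑(LinearMap.adjoint A) '' {u | ⟪u, v⟫ = (0:ℝ)}) :
    (LinearMap.adjoint A) (tilde v) = 0 ∧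
    (Set.range ⇑A ≠ ({0} : Set (EuclideanSpace ℝ (Fin (d+1)))) →
      (LinearMap.ker (LinearMap.adjoint A) : Set (EuclideanSpace ℝ (Fin (d+1))))
          = {u | ⟪u, v⟫ = (0:ℝ)} ∧
      Set.range ⇑A = {y : EuclideanSpace ℝ (Fin (d+1)) | ∃ c : ℝ, y = c • v}) := by
  set w := (LinearMap.adjoint A) (tilde v) with hwdef
  -- ⟪tilde v, v⟫ = 0
  have hperp : ⟪tilde v, v⟫ = (0:ℝ) := by
    have hsq : ‖tail v‖ ^ 2 = ∑ i : Fin d, (v i.succ) ^ 2 := by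
      rw [EuclideanSpace.norm_eq]
      rw [Real.sq_sqrt (by positivity)]
      simp [tail, sq_abs]
    have : ⟪tilde v, v⟫ = -(v 0 * v 0) + ∑ i : Fin d, v i.succ * v i.succ := by
      simp only [EuclideanSpace.inner_eq_star_dotProduct]
      simp [dotProduct, tilde, Fin.sum_univ_succ, Fin.succ_ne_zero]
    have h2 : ∑ i : Fin d, v i.succ * v i.succ = ∑ i : Fin d, (v i.succ) ^ 2 := by
      simp [sq]
    rw [this, hv, h2, ← hsq]
    ring
  -- w = 0
  have hw0 : w = 0 := by
    have hmem : w ∈ {y : EuclideanSpace ℝ (Fin n) | ∃ t : ℝ, t ≤ 0 ∧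
        y = t • (LinearMap.adjoint A) (tilde v)} := by
      rw [h]; exact ⟨tilde v, hperp, rfl⟩
    obtain ⟨t, ht, htw⟩ := hmem
    have htw' : w = t • w := htw
    have : (1 - t) • w = 0 := by
      rw [sub_smul, one_smul, sub_eq_zero]
      exact htw'
    rcases smul_eq_zero.mp this with h1 | h2
    · linarith
    · exact h2
  refine ⟨hw0, fun hr => ?_⟩
  -- v^⊥ ⊆ ker A†
  have hker0 : ∀ u, ⟪u, v⟫ = (0:ℝ) → (LinearMap.adjoint A) u = 0 := by
    intro u hu
    have : (LinearMap.adjoint A) u ∈ {y : EuclideanSpace ℝ (Fin n) | ∃ t : ℝ, t ≤ 0 ∧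
        y = t • (LinearMap.adjoint A) (tilde v)} := by rw [h]; exact ⟨u, hu, rfl⟩
    obtain ⟨t, _, htw⟩ := this
    rw [htw, ← hwdef, hw0, smul_zero]
  -- ker A† ⊆ v^⊥
  have hker : ∀ u, (LinearMap.adjoint A) u = 0 → ⟪u, v⟫ = (0:ℝ) := by
    intro x hx
    by_contra hxv
    -- then every y is in ker A†, so A = 0
    have hall : ∀ y, (LinearMap.adjoint A) y = 0 := by
      intro y
      have hxv' : ⟪x, v⟫ ≠ (0:ℝ) := hxv
      have hmem : ⟪y - (⟪y, v⟫ / ⟪x, v⟫) • x, v⟫ = (0:ℝ) := by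
        rw [inner_sub_left, real_inner_smul_left, div_mul_cancel₀ _ hxv', sub_self]
      have h2 := hker0 _ hmem
      have h3 : (LinearMap.adjoint A) y = (⟪y, v⟫ / ⟪x, v⟫) • (LinearMap.adjoint A) x +
          (LinearMap.adjoint A) (y - (⟪y, v⟫ / ⟪x, v⟫) • x) := by
        rw [map_sub, map_smul]; abel
      rw [h3, hx, h2, smul_zero, zero_add]
    have hA0 : ∀ u, A u = 0 := by
      intro u
      have : ⟪A u, A u⟫ = (0:ℝ) := by
        rw [← LinearMap.adjoint_inner_right, hall, inner_zero_right]
      exact inner_self_eq_zero.mp this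
    apply hr
    ext y
    simp only [Set.mem_range, Set.mem_singleton_iff]
    exact ⟨fun ⟨u, hu⟩ => hu ▸ hA0 u, fun hy => ⟨0, by rw [map_zero, hy]⟩⟩
  have hkerset : (LinearMap.ker (LinearMap.adjoint A) :
      Set (EuclideanSpace ℝ (Fin (d+1)))) = {u | ⟪u, v⟫ = (0:ℝ)} := by
    ext u
    exact ⟨fun hu => hker u hu, fun hu => hker0 u hu⟩
  refine ⟨hkerset, ?_⟩
  -- range A = span v
  have hvne : v ≠ 0 := fun hv0 => by simp [hv0] at hpos
  have hkersub : LinearMap.ker (LinearMap.adjoint A) = (ℝ ∙ v)ᗮ := by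
    ext u
    rw [Submodule.mem_orthogonal_singleton_iff_inner_right, real_inner_comm]
    constructor
    · intro hu; exact hker u hu
    · intro hu; exact hker0 u hu
  have hrange : LinearMap.range A = ℝ ∙ v := by
    have ho : (LinearMap.range A)ᗮ = LinearMap.ker (LinearMap.adjoint A) := by
      ext u
      simp only [Submodule.mem_orthogonal, LinearMap.mem_ker]
      constructor
      · intro hu
        apply ext_inner_left ℝ
        intro z
        rw [inner_zero_right, LinearMap.adjoint_inner_right]
        exact hu (A z) ⟨z, rfl⟩
      · rintro hu y ⟨z, rfl⟩
        rw [real_inner_comm, ← LinearMap.adjoint_inner_left, hu, inner_zero_left]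
    have := congrArg Submodule.orthogonal ho
    rw [Submodule.orthogonal_orthogonal, hkersub, Submodule.orthogonal_orthogonal] at this
    exact this
  ext y
  simp only [Set.mem_setOf_eq]
  constructor
  · rintro ⟨u, rfl⟩
    have : A u ∈ LinearMap.range A := ⟨u, rfl⟩
    rw [hrange, Submodule.mem_span_singleton] at this
    obtain ⟨c, hc⟩ := this
    exact ⟨c, hc.symm⟩
  · rintro ⟨c, rfl⟩
    have : c • v ∈ LinearMap.range A := by
      rw [hrange]; exact Submodule.smul_mem _ _ (Submodule.mem_span_singleton_self v)
    exact this
end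
end
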